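/- arXiv:1707.07992 — 2 statements merged into one kernel-verified Lean document; each statement's English description precedes it below -/
import Mathlib

section
/- Let A = A_C(Λ) be a non-degenerate code algebra, fix i ∈ {1,…,n}, assume a_{i,α} ≠ 1 for all α ∈ C* with α_i = 1, and let the distinct eigenvalues of ad_{t_i} be 1, 0, a₁, …, a_k with eigenspaces A₁ = span{t_i}, A₀ = span({t_j : j ≠ i} ∪ {e^α : α_i = 0}), A_{a_j} = span{e^β : β_i = 1, a_{i,β} = a_j}. Then the following fusion law holds: A₁·A₁ ⊆ A₁; A₁·A₀ = 0; A₁·A_{a_j} ⊆ A_{a_j}; A₀·A₀ ⊆ A₀; A₀·A_{a_j} ⊆ A_{a₁} ⊕ ⋯ ⊕ A_{a_k}; A_{a_j}·A_{a_l} ⊆ A₀ for j ≠ l; and A_{a_j}·A_{a_j} ⊆ A₁ ⊕ A₀. -/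
abbrev Word (n : ℕ) := Fin n → ZMod 2

def wsupp {n : ℕ} (α : Word n) : Finset (Fin n) :=
  Finset.univ.filter fun i => α i = 1

def dotW {n : ℕ} (u v : Word n) : ZMod 2 := ∑ i, u i * v i

def IsStar {n : ℕ} (C : Submodule (ZMod 2) (Word n)) (α : Word n) : Prop :=
  α ∈ C ∧ α ≠ 0 ∧ α ≠ 1

structure CodeAlgebra (F : Type*) [Field F] {n : ℕ} (C : Submodule (ZMod 2) (Word n))
    (a : Fin n → Word n → F) (b : Word n → Word n → F) (c : Fin n → Word n → F)
    (A : Type*) [AddCommGroup A] [Module F A] where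
  mul : A →ₗ[F] A →ₗ[F] A
  t : Fin n → A
  e : Word n → A
  bas : Module.Basis (Fin n ⊕ {α : Word n // IsStar C α}) F A
  bas_t : ∀ i, bas (Sum.inl i) = t i
  bas_e : ∀ α, bas (Sum.inr α) = e α.1
  mul_comm : ∀ x y : A, mul x y = mul y x
  t_mul_t : ∀ i j, mul (t i) (t j) = if i = j then t i else 0
  t_mul_e : ∀ (i : Fin n) (α : Word n), IsStar C α →
    mul (t i) (e α) = if α i = 1 then a i α • e α else 0
  e_mul_e : ∀ (α β : Word n), IsStar C α → IsStar C β → α ≠ β → α + β ≠ 1 →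
    mul (e α) (e β) = b α β • e (α + β)
  e_mul_self : ∀ (α : Word n), IsStar C α →
    mul (e α) (e α) = ∑ i ∈ wsupp α, c i α • t i
  e_mul_compl : ∀ (α β : Word n), IsStar C α → IsStar C β → α + β = 1 →
    mul (e α) (e β) = 0

def Nondeg {F : Type*} [Field F] {n : ℕ} (C : Submodule (ZMod 2) (Word n))
    (a : Fin n → Word n → F) (b : Word n → Word n → F) (c : Fin n → Word n → F) : Prop :=
  (∀ i : Fin n, ∃ α ∈ C, α i = 1) ∧ (∃ α, IsStar C α) ∧
  (∀ i α, IsStar C α → α i = 1 → a i α ≠ 0) ∧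
  (∀ α β, IsStar C α → IsStar C β → α ≠ β → α + β ≠ 1 → b α β ≠ 0) ∧
  (∀ i α, IsStar C α → α i = 1 → c i α ≠ 0)


/-!
Products of basis vectors are, up to scalars, basis vectors or zero: `t_j e^β` is a multiple of
`e^β`, `e^α e^β` one of `e^{α+β}` (or zero), and `e^α e^α` a combination of the `t_j` with
`j ∈ supp α`. So each rule of the fusion law comes down to the parity of the `i`-th coordinate:
the `e^α` in `A₀` have `α i = 0`, those in the other eigenspaces have `α i = 1`, and
`(α + β) i = α i + β i` in `ZMod 2`.
-/

theorem Submodule.apply_mem_of_mem_span_span {R M N P : Type*} [CommSemiring R]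
    [AddCommMonoid M] [AddCommMonoid N] [AddCommMonoid P] [Module R M] [Module R N] [Module R P]
    (f : M →ₗ[R] N →ₗ[R] P) {s : Set M} {t : Set N} {r : Submodule R P}
    (h : ∀ x ∈ s, ∀ y ∈ t, f x y ∈ r) : ∀ x ∈ span R s, ∀ y ∈ span R t, f x y ∈ r :=
  map₂_le.mp <| by
    rw [map₂_span_span, span_le]
    rintro _ ⟨x, hx, y, hy, rfl⟩
    exact h x hx y hy

theorem IsStar.add {n : ℕ} {C : Submodule (ZMod 2) (Word n)} {α β : Word n}
    (hα : IsStar C α) (hβ : IsStar C β) (hne : α ≠ β) (h1 : α + β ≠ 1) : IsStar C (α + β) :=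
  ⟨C.add_mem hα.1 hβ.1,
    fun h0 => hne <| funext fun j => by simpa using eq_neg_of_add_eq_zero_left (congrFun h0 j), h1⟩

namespace CodeAlgebra

variable {F : Type*} [Field F] {n : ℕ} {C : Submodule (ZMod 2) (Word n)}
  {a : Fin n → Word n → F} {b : Word n → Word n → F} {c : Fin n → Word n → F}
  {A : Type*} [AddCommGroup A] [Module F A] (CA : CodeAlgebra F C a b c A) {P : Submodule F A}

theorem t_mul_t_mem {j : Fin n} (k : Fin n) (h : CA.t j ∈ P) : CA.mul (CA.t j) (CA.t k) ∈ P := by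
  rw [CA.t_mul_t]
  split_ifs
  exacts [h, P.zero_mem]

theorem t_mul_e_mem (j : Fin n) {β : Word n} (hβ : IsStar C β) (h : CA.e β ∈ P) :
    CA.mul (CA.t j) (CA.e β) ∈ P := by
  rw [CA.t_mul_e j β hβ]
  split_ifs
  exacts [P.smul_mem _ h, P.zero_mem]

theorem e_mul_e_mem_of_ne {α β : Word n} (hα : IsStar C α) (hβ : IsStar C β) (hne : α ≠ β)
    (h : IsStar C (α + β) → CA.e (α + β) ∈ P) : CA.mul (CA.e α) (CA.e β) ∈ P := by
  by_cases h1 : α + β = 1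
  · rw [CA.e_mul_compl α β hα hβ h1]
    exact P.zero_mem
  · rw [CA.e_mul_e α β hα hβ hne h1]
    exact P.smul_mem _ (h (hα.add hβ hne h1))

theorem e_mul_self_mem {α : Word n} (hα : IsStar C α) (h : ∀ j ∈ wsupp α, CA.t j ∈ P) :
    CA.mul (CA.e α) (CA.e α) ∈ P := by
  rw [CA.e_mul_self α hα]
  exact P.sum_mem fun j hj => P.smul_mem _ (h j hj)

theorem e_mul_e_mem {α β : Word n} (hα : IsStar C α) (hβ : IsStar C β)
    (hsum : IsStar C (α + β) → CA.e (α + β) ∈ P) (hsupp : ∀ j ∈ wsupp α, CA.t j ∈ P) :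
    CA.mul (CA.e α) (CA.e β) ∈ P := by
  obtain rfl | hne := eq_or_ne α β
  exacts [CA.e_mul_self_mem hα hsupp, CA.e_mul_e_mem_of_ne hα hβ hne hsum]

variable (i : Fin n)

def zeroSpace : Submodule F A :=
  Submodule.span F (CA.t '' {j : Fin n | j ≠ i} ∪ CA.e '' {α : Word n | IsStar C α ∧ α i = 0})

def eigenSpace (μ : F) : Submodule F A :=
  Submodule.span F (CA.e '' {β : Word n | IsStar C β ∧ β i = 1 ∧ a i β = μ})

/-- `A_{a₁} ⊕ ⋯ ⊕ A_{a_k}` in the paper's notation. -/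
def oddSpace : Submodule F A :=
  Submodule.span F (CA.e '' {β : Word n | IsStar C β ∧ β i = 1})

variable {i}

theorem t_mem_zeroSpace {j : Fin n} (hj : j ≠ i) : CA.t j ∈ CA.zeroSpace i :=
  Submodule.subset_span (Or.inl ⟨j, hj, rfl⟩)

theorem e_mem_zeroSpace {α : Word n} (hα : IsStar C α) (hαi : α i = 0) :
    CA.e α ∈ CA.zeroSpace i :=
  Submodule.subset_span (Or.inr ⟨α, ⟨hα, hαi⟩, rfl⟩)

theorem e_mem_oddSpace {β : Word n} (hβ : IsStar C β) (hβi : β i = 1) :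
    CA.e β ∈ CA.oddSpace i :=
  Submodule.subset_span ⟨β, ⟨hβ, hβi⟩, rfl⟩

theorem t_mem_sup_zeroSpace (j : Fin n) :
    CA.t j ∈ Submodule.span F {CA.t i} ⊔ CA.zeroSpace i := by
  obtain rfl | hj := eq_or_ne j i
  exacts [Submodule.mem_sup_left (Submodule.mem_span_singleton_self _),
    Submodule.mem_sup_right (CA.t_mem_zeroSpace hj)]

theorem axis_mul_axis_mem :
    ∀ x ∈ Submodule.span F {CA.t i}, ∀ y ∈ Submodule.span F {CA.t i},
      CA.mul x y ∈ Submodule.span F {CA.t i} :=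
  Submodule.apply_mem_of_mem_span_span _ <| by
    rintro _ rfl _ rfl
    exact CA.t_mul_t_mem i (Submodule.mem_span_singleton_self _)

theorem axis_mul_zeroSpace :
    ∀ x ∈ Submodule.span F {CA.t i}, ∀ y ∈ CA.zeroSpace i, CA.mul x y = 0 :=
  fun x hx y hy => (Submodule.mem_bot F).mp <| Submodule.apply_mem_of_mem_span_span CA.mul
    (by
      rintro _ rfl _ (⟨j, hj, rfl⟩ | ⟨α, ⟨hα, hαi⟩, rfl⟩)
      · rw [Submodule.mem_bot, CA.t_mul_t, if_neg (Ne.symm hj)]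
      · rw [Submodule.mem_bot, CA.t_mul_e i α hα, hαi, if_neg zero_ne_one]) x hx y hy

theorem axis_mul_eigenSpace_mem (μ : F) :
    ∀ x ∈ Submodule.span F {CA.t i}, ∀ y ∈ CA.eigenSpace i μ,
      CA.mul x y ∈ CA.eigenSpace i μ :=
  Submodule.apply_mem_of_mem_span_span _ <| by
    rintro _ rfl _ ⟨β, hβ, rfl⟩
    exact CA.t_mul_e_mem i hβ.1 (Submodule.subset_span ⟨β, hβ, rfl⟩)

theorem zeroSpace_mul_zeroSpace_mem :
    ∀ x ∈ CA.zeroSpace i, ∀ y ∈ CA.zeroSpace i, CA.mul x y ∈ CA.zeroSpace i :=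
  Submodule.apply_mem_of_mem_span_span _ <| by
    rintro _ (⟨j, hj, rfl⟩ | ⟨α, ⟨hα, hαi⟩, rfl⟩) _ (⟨k, -, rfl⟩ | ⟨β, ⟨hβ, hβi⟩, rfl⟩)
    · exact CA.t_mul_t_mem k (CA.t_mem_zeroSpace hj)
    · exact CA.t_mul_e_mem j hβ (CA.e_mem_zeroSpace hβ hβi)
    · rw [CA.mul_comm]
      exact CA.t_mul_e_mem k hα (CA.e_mem_zeroSpace hα hαi)
    · refine CA.e_mul_e_mem hα hβ
        (fun h => CA.e_mem_zeroSpace h (by simp [hαi, hβi])) fun j hj => ?_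
      refine CA.t_mem_zeroSpace fun hji => ?_
      simp [wsupp, hji, hαi] at hj

theorem zeroSpace_mul_eigenSpace_mem_oddSpace (μ : F) :
    ∀ x ∈ CA.zeroSpace i, ∀ y ∈ CA.eigenSpace i μ, CA.mul x y ∈ CA.oddSpace i :=
  Submodule.apply_mem_of_mem_span_span _ <| by
    rintro _ (⟨j, -, rfl⟩ | ⟨α, ⟨hα, hαi⟩, rfl⟩) _ ⟨β, ⟨hβ, hβi, -⟩, rfl⟩
    · exact CA.t_mul_e_mem j hβ (CA.e_mem_oddSpace hβ hβi)
    · refine CA.e_mul_e_mem_of_ne hα hβ (by rintro rfl; simp [hαi] at hβi) fun h => ?_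
      exact CA.e_mem_oddSpace h (by simp [hαi, hβi])

theorem eigenSpace_mul_eigenSpace_mem_zeroSpace {μ ν : F} (hμν : μ ≠ ν) :
    ∀ x ∈ CA.eigenSpace i μ, ∀ y ∈ CA.eigenSpace i ν, CA.mul x y ∈ CA.zeroSpace i :=
  Submodule.apply_mem_of_mem_span_span _ <| by
    rintro _ ⟨β, ⟨hβ, hβi, rfl⟩, rfl⟩ _ ⟨γ, ⟨hγ, hγi, rfl⟩, rfl⟩
    refine CA.e_mul_e_mem_of_ne hβ hγ (by rintro rfl; exact hμν rfl) fun h => ?_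
    exact CA.e_mem_zeroSpace h (by rw [Pi.add_apply, hβi, hγi]; decide)

theorem eigenSpace_mul_eigenSpace_mem_sup (μ : F) :
    ∀ x ∈ CA.eigenSpace i μ, ∀ y ∈ CA.eigenSpace i μ,
      CA.mul x y ∈ Submodule.span F {CA.t i} ⊔ CA.zeroSpace i :=
  Submodule.apply_mem_of_mem_span_span _ <| by
    rintro _ ⟨β, ⟨hβ, hβi, -⟩, rfl⟩ _ ⟨γ, ⟨hγ, hγi, -⟩, rfl⟩
    refine CA.e_mul_e_mem hβ hγ (fun h => Submodule.mem_sup_right ?_)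
      fun j _ => CA.t_mem_sup_zeroSpace j
    exact CA.e_mem_zeroSpace h (by rw [Pi.add_apply, hβi, hγi]; decide)

end CodeAlgebra

theorem toral_fusion_law_general {F : Type*} [Field F] {n : ℕ}
    {C : Submodule (ZMod 2) (Word n)}
    {a : Fin n → Word n → F} {b : Word n → Word n → F} {c : Fin n → Word n → F}
    {A : Type*} [AddCommGroup A] [Module F A]
    (CA : CodeAlgebra F C a b c A)
    (i : Fin n)
    (A1 A0 Aneg : Submodule F A) (Aa : F → Submodule F A)
    (hA1 : A1 = Submodule.span F {CA.t i})
    (hA0 : A0 = Submodule.span F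
      (CA.t '' {j : Fin n | j ≠ i} ∪ CA.e '' {α : Word n | IsStar C α ∧ α i = 0}))
    (hAa : ∀ μ : F, Aa μ = Submodule.span F
      (CA.e '' {β : Word n | IsStar C β ∧ β i = 1 ∧ a i β = μ}))
    (hAneg : Aneg = Submodule.span F (CA.e '' {β : Word n | IsStar C β ∧ β i = 1})) :
    -- A₁ ⋆ A₁ ⊆ A₁
    (∀ x ∈ A1, ∀ y ∈ A1, CA.mul x y ∈ A1) ∧
    -- A₁ ⋆ A₀ = 0
    (∀ x ∈ A1, ∀ y ∈ A0, CA.mul x y = 0) ∧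
    -- A₁ ⋆ A_(a_j) ⊆ A_(a_j)
    (∀ μ : F, ∀ x ∈ A1, ∀ y ∈ Aa μ, CA.mul x y ∈ Aa μ) ∧
    -- A₀ ⋆ A₀ ⊆ A₀
    (∀ x ∈ A0, ∀ y ∈ A0, CA.mul x y ∈ A0) ∧
    -- A₀ ⋆ A_(a_j) ⊆ A_(a_1) ⊕ ⋯ ⊕ A_(a_k)
    (∀ μ : F, ∀ x ∈ A0, ∀ y ∈ Aa μ, CA.mul x y ∈ Aneg) ∧
    -- A_(a_j) ⋆ A_(a_l) ⊆ A₀ for j ≠ l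
    (∀ μ ν : F, μ ≠ ν → ∀ x ∈ Aa μ, ∀ y ∈ Aa ν, CA.mul x y ∈ A0) ∧
    -- A_(a_j) ⋆ A_(a_j) ⊆ A₁ ⊕ A₀
    (∀ μ : F, ∀ x ∈ Aa μ, ∀ y ∈ Aa μ, CA.mul x y ∈ A1 ⊔ A0) := by
  obtain rfl : Aa = CA.eigenSpace i := funext hAa
  obtain rfl : A0 = CA.zeroSpace i := hA0
  obtain rfl : Aneg = CA.oddSpace i := hAneg
  subst hA1
  exact ⟨CA.axis_mul_axis_mem, CA.axis_mul_zeroSpace, CA.axis_mul_eigenSpace_mem,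
    CA.zeroSpace_mul_zeroSpace_mem, CA.zeroSpace_mul_eigenSpace_mem_oddSpace,
    fun _ _ => CA.eigenSpace_mul_eigenSpace_mem_zeroSpace, CA.eigenSpace_mul_eigenSpace_mem_sup⟩

/-- Proposition 3.12: the fusion law for the toral axis t_i. -/
theorem toral_fusion_law {F : Type*} [Field F] {n : ℕ}
    {C : Submodule (ZMod 2) (Word n)}
    {a : Fin n → Word n → F} {b : Word n → Word n → F} {c : Fin n → Word n → F}
    {A : Type*} [AddCommGroup A] [Module F A]
    (CA : CodeAlgebra F C a b c A)
    (hnd : Nondeg C a b c) (i : Fin n)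
    (ha1 : ∀ α, IsStar C α → α i = 1 → a i α ≠ 1)
    (A1 A0 Aneg : Submodule F A) (Aa : F → Submodule F A)
    (hA1 : A1 = Submodule.span F {CA.t i})
    (hA0 : A0 = Submodule.span F
      (CA.t '' {j : Fin n | j ≠ i} ∪ CA.e '' {α : Word n | IsStar C α ∧ α i = 0}))
    (hAa : ∀ μ : F, Aa μ = Submodule.span F
      (CA.e '' {β : Word n | IsStar C β ∧ β i = 1 ∧ a i β = μ}))
    (hAneg : Aneg = Submodule.span F (CA.e '' {β : Word n | IsStar C β ∧ β i = 1})) :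
    -- A₁ ⋆ A₁ ⊆ A₁
    (∀ x ∈ A1, ∀ y ∈ A1, CA.mul x y ∈ A1) ∧
    -- A₁ ⋆ A₀ = 0
    (∀ x ∈ A1, ∀ y ∈ A0, CA.mul x y = 0) ∧
    -- A₁ ⋆ A_(a_j) ⊆ A_(a_j)
    (∀ μ : F, ∀ x ∈ A1, ∀ y ∈ Aa μ, CA.mul x y ∈ Aa μ) ∧
    -- A₀ ⋆ A₀ ⊆ A₀
    (∀ x ∈ A0, ∀ y ∈ A0, CA.mul x y ∈ A0) ∧
    -- A₀ ⋆ A_(a_j) ⊆ A_(a_1) ⊕ ⋯ ⊕ A_(a_k)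
    (∀ μ : F, ∀ x ∈ A0, ∀ y ∈ Aa μ, CA.mul x y ∈ Aneg) ∧
    -- A_(a_j) ⋆ A_(a_l) ⊆ A₀ for j ≠ l
    (∀ μ ν : F, μ ≠ ν → ∀ x ∈ Aa μ, ∀ y ∈ Aa ν, CA.mul x y ∈ A0) ∧
    -- A_(a_j) ⋆ A_(a_j) ⊆ A₁ ⊕ A₀
    (∀ μ : F, ∀ x ∈ Aa μ, ∀ y ∈ Aa μ, CA.mul x y ∈ A1 ⊔ A0) :=
  toral_fusion_law_general CA i A1 A0 Aneg Aa hA1 hA0 hAa hAneg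
end

section
/- Let A = A_C(Λ) be a code algebra, α ∈ C* with a_α := a_{i,α} and c_α := c_{i,α} independent of i ∈ supp(α), and let e = λ·t_α + μ·e^α where t_α := Σ_{i ∈ supp(α)} t_i, λ = 1/(2·a_α·|α|), and μ² = (λ − λ²)/c_α. Then: (1) for i ∉ supp(α), t_i is a 0-eigenvector of ad_e; (2) if 𝟏 ∈ C, then e^{α^c} is a 0-eigenvector of ad_e; (3) for i, j ∈ supp(α), t_i − t_j is a λ-eigenvector of ad_e; (4) 2μc_α·t_α − e^α is a (λ − 1/2)-eigenvector of ad_e. -/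
/-!
With `t_α = ∑_{i ∈ supp α} t_i`, the multiplication table gives `t_α t_j = t_j` or `0` according
as `j ∈ supp α` or not, `t_α e^α = a_α |α| e^α`, `e^α e^α = c_α t_α` and `t_α e^{α^c} = 0`, from
which (1)–(3) are read off. For (4), `ad_e` preserves the plane spanned by `t_α` and `e^α`, and
the relations `2 λ a_α |α| = 1`, `μ² c_α = λ - λ²` are exactly what makes `2 μ c_α t_α - e^α` an
eigenvector there. The eigenvectors are nonzero because `t_i` and `e^β` form a basis.
-/

@[simp]
lemma mem_wsupp {n : ℕ} {α : Word n} {i : Fin n} : i ∈ wsupp α ↔ α i = 1 := by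
  simp [wsupp]

lemma IsStar.one_add {n : ℕ} {C : Submodule (ZMod 2) (Word n)} {α : Word n}
    (h1 : (1 : Word n) ∈ C) (hα : IsStar C α) : IsStar C (1 + α) :=
  ⟨C.add_mem h1 hα.1,
    fun h => hα.2.2 <|
      (eq_neg_of_add_eq_zero_right h).trans (funext fun _ => ZMod.neg_eq_self_mod_two 1),
    fun h => hα.2.1 (by simpa using h)⟩

lemma add_one_add_self {n : ℕ} (α : Word n) : α + (1 + α) = 1 := by
  ext i
  simp only [Pi.add_apply, Pi.one_apply]
  ring_nf
  reduce_mod_char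

open Module.End

namespace CodeAlgebra

variable {F : Type*} [Field F] {n : ℕ} {C : Submodule (ZMod 2) (Word n)}
  {a : Fin n → Word n → F} {b : Word n → Word n → F} {c : Fin n → Word n → F}
  {A : Type*} [AddCommGroup A] [Module F A] (CA : CodeAlgebra F C a b c A)

def tSum (α : Word n) : A := ∑ i ∈ wsupp α, CA.t i

lemma t_ne_zero (i : Fin n) : CA.t i ≠ 0 :=
  CA.bas_t i ▸ CA.bas.ne_zero _

lemma e_ne_zero {α : Word n} (hα : IsStar C α) : CA.e α ≠ 0 :=
  CA.bas_e ⟨α, hα⟩ ▸ CA.bas.ne_zero _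

lemma t_sub_t_ne_zero {i j : Fin n} (hij : i ≠ j) : CA.t i - CA.t j ≠ 0 :=
  sub_ne_zero.2 fun h => hij <| Sum.inl_injective <| CA.bas.injective <| by
    rw [CA.bas_t, CA.bas_t, h]

lemma smul_tSum_sub_e_ne_zero {α : Word n} (hα : IsStar C α) (r : F) (β : Word n) :
    r • CA.tSum β - CA.e α ≠ 0 := by
  intro h
  have := congrArg (fun v => CA.bas.repr v (Sum.inr ⟨α, hα⟩)) h
  simp [tSum, ← CA.bas_t, ← CA.bas_e ⟨α, hα⟩] at this

lemma mul_smul_add_smul_apply (r m : F) (x y z : A) :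
    CA.mul (r • x + m • y) z = r • CA.mul x z + m • CA.mul y z := by
  simp only [map_add, map_smul, LinearMap.add_apply, LinearMap.smul_apply]

lemma tSum_mul_t (α : Word n) (j : Fin n) :
    CA.mul (CA.tSum α) (CA.t j) = if α j = 1 then CA.t j else 0 := by
  simp [tSum, CA.t_mul_t]

lemma tSum_mul_e (α : Word n) {β : Word n} (hβ : IsStar C β) :
    CA.mul (CA.tSum α) (CA.e β) = (∑ i ∈ wsupp α with β i = 1, a i β) • CA.e β := by
  simp [tSum, CA.t_mul_e _ _ hβ, Finset.sum_smul, Finset.sum_filter]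

lemma e_mul_t {α : Word n} (hα : IsStar C α) (j : Fin n) :
    CA.mul (CA.e α) (CA.t j) = if α j = 1 then a j α • CA.e α else 0 := by
  rw [CA.mul_comm, CA.t_mul_e j α hα]

lemma tSum_mul_tSum (α : Word n) : CA.mul (CA.tSum α) (CA.tSum α) = CA.tSum α :=
  calc CA.mul (CA.tSum α) (CA.tSum α) = ∑ j ∈ wsupp α, CA.mul (CA.tSum α) (CA.t j) :=
        map_sum _ _ _
    _ = CA.tSum α :=
        Finset.sum_congr rfl fun j hj => by rw [tSum_mul_t, if_pos (mem_wsupp.1 hj)]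

lemma tSum_mul_e_self {α : Word n} (hα : IsStar C α) {aα : F}
    (haα : ∀ i, α i = 1 → a i α = aα) :
    CA.mul (CA.tSum α) (CA.e α) = ((wsupp α).card * aα) • CA.e α := by
  rw [tSum_mul_e _ _ hα, Finset.filter_true_of_mem fun i hi => mem_wsupp.1 hi,
    Finset.sum_congr rfl fun i hi => haα i (mem_wsupp.1 hi), Finset.sum_const, nsmul_eq_mul]

lemma e_mul_e_self_of_const {α : Word n} (hα : IsStar C α) {cα : F}
    (hcα : ∀ i, α i = 1 → c i α = cα) :
    CA.mul (CA.e α) (CA.e α) = cα • CA.tSum α := by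
  rw [CA.e_mul_self α hα, tSum, Finset.smul_sum]
  exact Finset.sum_congr rfl fun i hi => by rw [hcα i (mem_wsupp.1 hi)]

lemma hasEigenvector_zero_t {α : Word n} (hα : IsStar C α) (r m : F) {j : Fin n}
    (hj : α j = 0) :
    HasEigenvector (CA.mul (r • CA.tSum α + m • CA.e α)) 0 (CA.t j) := by
  have hj' : α j ≠ 1 := by simp [hj]
  refine ⟨mem_eigenspace_iff.2 ?_, CA.t_ne_zero j⟩
  simp [tSum_mul_t, CA.e_mul_t hα, hj']

lemma hasEigenvector_zero_e_one_add (h1 : (1 : Word n) ∈ C) {α : Word n} (hα : IsStar C α)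
    (r m : F) :
    HasEigenvector (CA.mul (r • CA.tSum α + m • CA.e α)) 0 (CA.e (1 + α)) := by
  have hα' := hα.one_add h1
  refine ⟨mem_eigenspace_iff.2 ?_, CA.e_ne_zero hα'⟩
  have h_disj : ∀ i ∈ wsupp α, (1 + α) i ≠ 1 := fun i hi => by simp [mem_wsupp.1 hi]
  rw [mul_smul_add_smul_apply, tSum_mul_e _ _ hα', Finset.filter_false_of_mem h_disj,
    CA.e_mul_compl α _ hα hα' (add_one_add_self α)]
  simp

lemma mul_t_of_eq_one {α : Word n} (hα : IsStar C α) (r m : F) {j : Fin n} (hj : α j = 1) :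
    CA.mul (r • CA.tSum α + m • CA.e α) (CA.t j) = r • CA.t j + (m * a j α) • CA.e α := by
  simp [tSum_mul_t, CA.e_mul_t hα, hj, smul_smul]

lemma hasEigenvector_t_sub_t {α : Word n} (hα : IsStar C α) {aα : F}
    (haα : ∀ i, α i = 1 → a i α = aα) (r m : F) {i j : Fin n} (hi : α i = 1) (hj : α j = 1)
    (hij : i ≠ j) :
    HasEigenvector (CA.mul (r • CA.tSum α + m • CA.e α)) r (CA.t i - CA.t j) := by
  refine ⟨mem_eigenspace_iff.2 ?_, CA.t_sub_t_ne_zero hij⟩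
  rw [map_sub, CA.mul_t_of_eq_one hα r m hi, CA.mul_t_of_eq_one hα r m hj, haα i hi, haα j hj]
  module

lemma hasEigenvector_smul_tSum_sub_e {α : Word n} (hα : IsStar C α) {aα cα : F}
    (haα : ∀ i, α i = 1 → a i α = aα) (hcα : ∀ i, α i = 1 → c i α = cα) {r m : F}
    (hr : 2 * r * ((wsupp α).card * aα) = 1) (hm : m ^ 2 * cα = r - r ^ 2) :
    HasEigenvector (CA.mul (r • CA.tSum α + m • CA.e α)) (r - 1 / 2)
      ((2 * m * cα) • CA.tSum α - CA.e α) := by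
  set κ : F := (wsupp α).card * aα
  have h2 : (2 : F) ≠ 0 := left_ne_zero_of_mul (left_ne_zero_of_mul_eq_one hr)
  refine ⟨mem_eigenspace_iff.2 ?_, CA.smul_tSum_sub_e_ne_zero hα _ _⟩
  have hT : CA.mul (r • CA.tSum α + m • CA.e α) (CA.tSum α) =
      r • CA.tSum α + (m * κ) • CA.e α := by
    rw [mul_smul_add_smul_apply, tSum_mul_tSum, CA.mul_comm (CA.e α), CA.tSum_mul_e_self hα haα,
      smul_smul]
  have hE : CA.mul (r • CA.tSum α + m • CA.e α) (CA.e α) =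
      (r * κ) • CA.e α + (m * cα) • CA.tSum α := by
    rw [mul_smul_add_smul_apply, CA.tSum_mul_e_self hα haα, CA.e_mul_e_self_of_const hα hcα,
      smul_smul, smul_smul]
  have hcoeff_T : 2 * m * cα * r - m * cα = (r - 1 / 2) * (2 * m * cα) := by
    field_simp
  have hcoeff_E : 2 * m * cα * (m * κ) - r * κ = -(r - 1 / 2) := by
    field_simp
    linear_combination (4 * κ) * hm + (1 - 2 * r) * hr
  rw [map_sub, map_smul, hT, hE]
  linear_combination (norm := module) hcoeff_T • CA.tSum α + hcoeff_E • CA.e α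

end CodeAlgebra

/-- Lemma 4.7: eigenvectors of the small idempotent e = λ t_α + μ e^α. -/
theorem small_idempotent_eigenvectors {F : Type*} [Field F] {n : ℕ}
    {C : Submodule (ZMod 2) (Word n)}
    {a : Fin n → Word n → F} {b : Word n → Word n → F} {c : Fin n → Word n → F}
    {A : Type*} [AddCommGroup A] [Module F A]
    (CA : CodeAlgebra F C a b c A)
    (α : Word n) (hα : IsStar C α)
    (aα cα : F)
    (haα : ∀ i, α i = 1 → a i α = aα) (hcα : ∀ i, α i = 1 → c i α = cα)
    (h2 : (2 : F) * aα * ((wsupp α).card : F) ≠ 0) (hc0 : cα ≠ 0)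
    (lam : F) (hlam : lam = ((2 : F) * aα * ((wsupp α).card : F))⁻¹)
    (mu : F) (hmu : mu ^ 2 = (lam - lam ^ 2) / cα)
    (s : A) (hs : s = lam • (∑ i ∈ wsupp α, CA.t i) + mu • CA.e α)
    (f : Module.End F A) (hf : f = CA.mul s) :
    -- (1.i) eigenvalue 0: t_i for i outside the support of α
    (∀ i, α i = 0 → f.HasEigenvector 0 (CA.t i)) ∧
    -- (1.ii) eigenvalue 0: the complementary codeword element (when 𝟏 ∈ C)
    ((1 : Word n) ∈ C → f.HasEigenvector 0 (CA.e (1 + α))) ∧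
    -- (2) eigenvalue λ: differences of toral elements in the support
    (∀ i j, α i = 1 → α j = 1 → i ≠ j → f.HasEigenvector lam (CA.t i - CA.t j)) ∧
    -- (3) eigenvalue λ - 1/2
    f.HasEigenvector (lam - 1 / 2)
      ((2 * mu * cα) • (∑ i ∈ wsupp α, CA.t i) - CA.e α) := by
  subst hf hs
  have hlam' : 2 * lam * ((wsupp α).card * aα) = 1 := by
    linear_combination (hlam ▸ inv_mul_cancel₀ h2 : lam * (2 * aα * (wsupp α).card) = 1)
  have hmu' : mu ^ 2 * cα = lam - lam ^ 2 := by
    rw [hmu, div_mul_cancel₀ _ hc0]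
  exact ⟨fun i hi => CA.hasEigenvector_zero_t hα lam mu hi,
    fun h1 => CA.hasEigenvector_zero_e_one_add h1 hα lam mu,
    fun i j hi hj hij => CA.hasEigenvector_t_sub_t hα haα lam mu hi hj hij,
    CA.hasEigenvector_smul_tSum_sub_e hα haα hcα hlam' hmu'⟩
end
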